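/- arXiv:1809.01620 — 4 statements merged into one kernel-verified Lean document; each statement's English description precedes it below -/
import Mathlib

section
/- Let f be a natural number, S a finite set of nodes with |S| = 3f+1, F ⊆ S with |F| ≤ f, and V a type of values. Suppose C ⊆ S with |C| ≥ 2f+1 is the set of nodes that committed a value B ∈ V, and let r : S → Option V record the value each node reports in its view-change message, with r x = some B for every x ∈ C \ F. Then for any set W ⊆ S of view-change senders with |W| ≥ 2f+1, there exists x ∈ W with x ∉ F and r x = some B. -/
open Finset

theorem Finset.card_add_card_le_card_inter_add_card {α : Type*} [DecidableEq α]
    {s t u : Finset α} (ht : t ⊆ s) (hu : u ⊆ s) : #t + #u ≤ #(t ∩ u) + #s := by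
  rw [← card_union_add_card_inter t u, add_comm]
  exact Nat.add_le_add_left (card_le_card (union_subset ht hu)) _

/-- `f + 1` exceeds the number of byzantine nodes, so two quorums always share an honest node. -/
theorem add_one_le_card_inter_of_quorums {α : Type*} [DecidableEq α] (f : ℕ) {S W C : Finset α}
    (hS : #S = 3 * f + 1) (hW : W ⊆ S) (hWcard : 2 * f + 1 ≤ #W)
    (hC : C ⊆ S) (hCcard : 2 * f + 1 ≤ #C) : f + 1 ≤ #(W ∩ C) := by
  have := card_add_card_le_card_inter_add_card hW hC
  omega

theorem view_change_preserves_commit_general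
    {α : Type*} [DecidableEq α] {V : Type*} (f : ℕ) (S F C : Finset α)
    (hS : S.card = 3 * f + 1)
    (hFcard : F.card ≤ f)
    (hC : C ⊆ S) (hCcard : C.card ≥ 2 * f + 1)
    (B : V) (r : α → Option V)
    (hr : ∀ x ∈ C \ F, r x = some B) :
    ∀ W ⊆ S, W.card ≥ 2 * f + 1 → ∃ x ∈ W, x ∉ F ∧ r x = some B := by
  intro W hW hWcard
  have hquorum := add_one_le_card_inter_of_quorums f hS hW hWcard hC hCcard
  obtain ⟨x, hxWC, hxF⟩ := exists_mem_notMem_of_card_lt_card (s := F) (t := W ∩ C) (by omega)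
  rw [mem_inter] at hxWC
  exact ⟨x, hxWC.1, hxF, hr x (mem_sdiff.2 ⟨hxWC.2, hxF⟩)⟩

theorem view_change_preserves_commit
    {α : Type*} [DecidableEq α] {V : Type*} (f : ℕ) (S F C : Finset α)
    (hS : S.card = 3 * f + 1)
    (hF : F ⊆ S) (hFcard : F.card ≤ f)
    (hC : C ⊆ S) (hCcard : C.card ≥ 2 * f + 1)
    (B : V) (r : α → Option V)
    (hr : ∀ x ∈ C \ F, r x = some B) :
    ∀ W ⊆ S, W.card ≥ 2 * f + 1 → ∃ x ∈ W, x ∉ F ∧ r x = some B :=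
  view_change_preserves_commit_general f S F C hS hFcard hC hCcard B r hr
end

section
/- Let f be a natural number and let S₀ and S₁ be finite sets of nodes with |S₀| = 3f+1 and |S₁| = 3f+1 such that |S₀ ∩ S₁| ≥ 2f+1 and every node in S₀ ∩ S₁ is honest (i.e., S₀ ∩ S₁ is disjoint from the byzantine set F). Then for any A ⊆ S₀ with |A| ≥ 2f+1 and any B ⊆ S₁ with |B| ≥ 2f+1, there exists an honest node x ∈ A ∩ B ∩ S₀ ∩ S₁. -/
open Finset

/-- Since `A ∪ B ⊆ S₀ ∪ S₁`, inclusion–exclusion on both sides forces `#(A ∩ B) > 0`. -/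
theorem Finset.inter_nonempty_of_card_add_card_lt_card_add_card_add_card_inter
    {α : Type*} [DecidableEq α] {S₀ S₁ A B : Finset α} (hA : A ⊆ S₀) (hB : B ⊆ S₁)
    (h : #S₀ + #S₁ < #A + #B + #(S₀ ∩ S₁)) : (A ∩ B).Nonempty := by
  have hunion : #(A ∪ B) ≤ #(S₀ ∪ S₁) := card_le_card (union_subset_union hA hB)
  have hAB := card_union_add_card_inter A B
  have hS := card_union_add_card_inter S₀ S₁
  rw [← card_pos]
  omega

theorem two_quorum_systems_honest_intersection
    {α : Type*} [DecidableEq α] (f : ℕ) (S₀ S₁ F A B : Finset α)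
    (hS₀ : S₀.card = 3 * f + 1) (hS₁ : S₁.card = 3 * f + 1)
    (hInter : (S₀ ∩ S₁).card ≥ 2 * f + 1)
    (hHonest : ∀ x ∈ S₀ ∩ S₁, x ∉ F)
    (hA : A ⊆ S₀) (hAcard : A.card ≥ 2 * f + 1)
    (hB : B ⊆ S₁) (hBcard : B.card ≥ 2 * f + 1) :
    ∃ x, x ∈ A ∧ x ∈ B ∧ x ∈ S₀ ∧ x ∈ S₁ ∧ x ∉ F := by
  obtain ⟨x, hx⟩ :=
    inter_nonempty_of_card_add_card_lt_card_add_card_add_card_inter hA hB (by omega)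
  obtain ⟨hxA, hxB⟩ := mem_inter.mp hx
  have hxS : x ∈ S₀ ∩ S₁ := mem_inter.mpr ⟨hA hxA, hB hxB⟩
  exact ⟨x, hxA, hxB, hA hxA, hB hxB, hHonest x hxS⟩
end

section
/- Let S be a finite set of nodes, ψ : S → ℕ a stake function with total stake Ψ = Σ_{x∈S} ψ(x), and F ⊆ S a byzantine set with Σ_{x∈F} ψ(x) ≤ ⌊Ψ/3⌋. If A, B ⊆ S satisfy Σ_{x∈A} ψ(x) ≥ ⌊2Ψ/3⌋ + 1 and Σ_{x∈B} ψ(x) ≥ ⌊2Ψ/3⌋ + 1, then there exists a node x ∈ A ∩ B with x ∉ F and ψ(x) ≥ 1. -/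
/-! Two stake quorums each hold more than two thirds of the stake, so by inclusion–exclusion
their intersection holds more than one third of it, which is more than the byzantine nodes hold.
Hence some stake in the intersection lies outside `F`, i.e. on an honest node of positive stake. -/

namespace Finset

variable {ι M : Type*} [AddCommMonoid M] [PartialOrder M] [CanonicallyOrderedAdd M]

theorem sum_add_sum_le_sum_add_sum_inter [DecidableEq ι] {S A B : Finset ι}
    (hA : A ⊆ S) (hB : B ⊆ S) (f : ι → M) :
    ∑ x ∈ A, f x + ∑ x ∈ B, f x ≤ ∑ x ∈ S, f x + ∑ x ∈ A ∩ B, f x := by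
  rw [← sum_union_inter]
  gcongr
  exact union_subset hA hB

theorem exists_mem_notMem_pos_of_sum_lt [DecidableEq ι] {T F : Finset ι} {f : ι → M}
    (h : ∑ x ∈ F, f x < ∑ x ∈ T, f x) : ∃ x ∈ T, x ∉ F ∧ 0 < f x := by
  by_contra! hzero
  have hsdiff : ∑ x ∈ T \ F, f x = 0 :=
    sum_eq_zero fun x hx ↦ not_not.mp <| mt pos_iff_ne_zero.mpr <|
      hzero x (mem_sdiff.mp hx).1 (mem_sdiff.mp hx).2
  refine h.not_ge ?_
  calc ∑ x ∈ T, f x = ∑ x ∈ T ∩ F, f x + ∑ x ∈ T \ F, f x := (sum_inter_add_sum_sdiff T F f).symm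
    _ = ∑ x ∈ T ∩ F, f x := by rw [hsdiff, add_zero]
    _ ≤ ∑ x ∈ F, f x := sum_le_sum_of_subset inter_subset_right

end Finset

theorem stake_quorum_intersection_general
    {α : Type*} [DecidableEq α] (S F A B : Finset α) (ψ : α → ℕ)
    (hFstake : ∑ x ∈ F, ψ x ≤ (∑ x ∈ S, ψ x) / 3)
    (hA : A ⊆ S) (hB : B ⊆ S)
    (hAstake : ∑ x ∈ A, ψ x ≥ 2 * (∑ x ∈ S, ψ x) / 3 + 1)
    (hBstake : ∑ x ∈ B, ψ x ≥ 2 * (∑ x ∈ S, ψ x) / 3 + 1) :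
    ∃ x ∈ A ∩ B, x ∉ F ∧ ψ x ≥ 1 := by
  have hinter : ∑ x ∈ F, ψ x < ∑ x ∈ A ∩ B, ψ x := by
    have := Finset.sum_add_sum_le_sum_add_sum_inter hA hB ψ
    omega
  exact Finset.exists_mem_notMem_pos_of_sum_lt hinter

theorem stake_quorum_intersection
    {α : Type*} [DecidableEq α] (S F A B : Finset α) (ψ : α → ℕ)
    (hF : F ⊆ S) (hFstake : ∑ x ∈ F, ψ x ≤ (∑ x ∈ S, ψ x) / 3)
    (hA : A ⊆ S) (hB : B ⊆ S)
    (hAstake : ∑ x ∈ A, ψ x ≥ 2 * (∑ x ∈ S, ψ x) / 3 + 1)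
    (hBstake : ∑ x ∈ B, ψ x ≥ 2 * (∑ x ∈ S, ψ x) / 3 + 1) :
    ∃ x ∈ A ∩ B, x ∉ F ∧ ψ x ≥ 1 :=
  stake_quorum_intersection_general S F A B ψ hFstake hA hB hAstake hBstake
end

section
/- Let S be a finite set of nodes, ψ : S → ℕ a stake function with total stake Ψ = Σ_{x∈S} ψ(x), F ⊆ S with Σ_{x∈F} ψ(x) ≤ ⌊Ψ/3⌋, and V a type of values. Let h : S → Option V record the (at most one) value committed by each honest node. If A, B ⊆ S satisfy Σ_{x∈A} ψ(x) ≥ ⌊2Ψ/3⌋ + 1 and Σ_{x∈B} ψ(x) ≥ ⌊2Ψ/3⌋ + 1, and there are values a, b ∈ V such that h x = some a for every x ∈ A \ F with ψ(x) ≥ 1, and h x = some b for every x ∈ B \ F with ψ(x) ≥ 1, then a = b. -/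
/-!
Two stake quorums each hold more than two thirds of the total stake Ψ, so by inclusion–exclusion
their intersection holds more than ⌊Ψ/3⌋, which bounds the byzantine stake. Hence the intersection
contains an honest node of positive stake, and that node committed both `a` and `b`.
-/

namespace Finset

variable {α : Type*} [DecidableEq α]

theorem sum_add_sum_le_sum_add_sum_add_sum_inter_sdiff {S A B : Finset α} (F : Finset α)
    (hA : A ⊆ S) (hB : B ⊆ S) (ψ : α → ℕ) :
    ∑ x ∈ A, ψ x + ∑ x ∈ B, ψ x ≤ ∑ x ∈ S, ψ x + ∑ x ∈ F, ψ x + ∑ x ∈ (A ∩ B) \ F, ψ x := by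
  have hunion : ∑ x ∈ A ∪ B, ψ x ≤ ∑ x ∈ S, ψ x := sum_le_sum_of_subset (union_subset hA hB)
  have hfaulty : ∑ x ∈ A ∩ B ∩ F, ψ x ≤ ∑ x ∈ F, ψ x := sum_le_sum_of_subset inter_subset_right
  rw [← sum_union_inter, ← sum_inter_add_sum_sdiff (A ∩ B) F]
  omega

theorem exists_mem_sdiff_mem_sdiff_pos_of_sum_add_sum_lt {S F A B : Finset α} {ψ : α → ℕ}
    (hA : A ⊆ S) (hB : B ⊆ S)
    (hlt : ∑ x ∈ S, ψ x + ∑ x ∈ F, ψ x < ∑ x ∈ A, ψ x + ∑ x ∈ B, ψ x) :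
    ∃ x ∈ A \ F, x ∈ B \ F ∧ 0 < ψ x := by
  have hpos : ∑ x ∈ (A ∩ B) \ F, ψ x ≠ 0 := by
    have := sum_add_sum_le_sum_add_sum_add_sum_inter_sdiff F hA hB ψ
    omega
  obtain ⟨x, hx, hψx⟩ := exists_ne_zero_of_sum_ne_zero hpos
  simp only [mem_sdiff, mem_inter] at hx
  exact ⟨x, mem_sdiff.2 ⟨hx.1.1, hx.2⟩, mem_sdiff.2 ⟨hx.1.2, hx.2⟩, Nat.pos_of_ne_zero hψx⟩

end Finset

theorem stake_within_view_agreement_general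
    {α : Type*} [DecidableEq α] {V : Type*} (S F A B : Finset α) (ψ : α → ℕ)
    (h : α → Option V)
    (hFstake : ∑ x ∈ F, ψ x ≤ (∑ x ∈ S, ψ x) / 3)
    (hA : A ⊆ S) (hB : B ⊆ S)
    (hAstake : ∑ x ∈ A, ψ x ≥ 2 * (∑ x ∈ S, ψ x) / 3 + 1)
    (hBstake : ∑ x ∈ B, ψ x ≥ 2 * (∑ x ∈ S, ψ x) / 3 + 1)
    (a b : V)
    (hAa : ∀ x ∈ A \ F, ψ x ≥ 1 → h x = some a)
    (hBb : ∀ x ∈ B \ F, ψ x ≥ 1 → h x = some b) :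
    a = b := by
  -- the threshold arithmetic `Ψ + ⌊Ψ/3⌋ < 2 (⌊2Ψ/3⌋ + 1)` is left to `omega`
  obtain ⟨x, hxA, hxB, hψx⟩ :=
    Finset.exists_mem_sdiff_mem_sdiff_pos_of_sum_add_sum_lt (F := F) (ψ := ψ) hA hB (by omega)
  exact Option.some_injective _ ((hAa x hxA hψx).symm.trans (hBb x hxB hψx))

theorem stake_within_view_agreement
    {α : Type*} [DecidableEq α] {V : Type*} (S F A B : Finset α) (ψ : α → ℕ)
    (h : α → Option V)
    (hF : F ⊆ S) (hFstake : ∑ x ∈ F, ψ x ≤ (∑ x ∈ S, ψ x) / 3)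
    (hA : A ⊆ S) (hB : B ⊆ S)
    (hAstake : ∑ x ∈ A, ψ x ≥ 2 * (∑ x ∈ S, ψ x) / 3 + 1)
    (hBstake : ∑ x ∈ B, ψ x ≥ 2 * (∑ x ∈ S, ψ x) / 3 + 1)
    (a b : V)
    (hAa : ∀ x ∈ A \ F, ψ x ≥ 1 → h x = some a)
    (hBb : ∀ x ∈ B \ F, ψ x ≥ 1 → h x = some b) :
    a = b :=
  stake_within_view_agreement_general S F A B ψ h hFstake hA hB hAstake hBstake a b hAa hBb
end
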